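/- Let p ≥ 0 and let σ : R^d → R^d be a diffeomorphism satisfying ⟨σ(x)⟩ ~ ⟨x⟩^r, |∇^k σ(x)| ≤ C_k ⟨x⟩^{r−k} for all k ≥ 1, and |Dσ(x)^{−1}| ~ ⟨x⟩^{1−r}, with r = 1/(p+1). Then there exists δ_0 > 0 such that σ(Z^d) is (p, δ)-dense for all δ ≥ δ_0, i.e., the balls B(σ(n), δ⟨σ(n)⟩^{−p}) for n ∈ Z^d cover R^d. -/

import Mathlib

noncomputable def jb {d : ℕ} (x : EuclideanSpace ℝ (Fin d)) : ℝ := Real.sqrt (1 + ‖x‖ ^ 2)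

noncomputable def intVec (d : ℕ) (n : Fin d → ℤ) : EuclideanSpace ℝ (Fin d) :=
  WithLp.toLp 2 (fun i => (n i : ℝ) : Fin d → ℝ)

lemma one_le_jb {d : ℕ} (x : EuclideanSpace ℝ (Fin d)) : 1 ≤ jb x := by
  rw [jb]
  calc (1:ℝ) = Real.sqrt 1 := by simp
    _ ≤ Real.sqrt (1 + ‖x‖ ^ 2) := Real.sqrt_le_sqrt (by nlinarith [sq_nonneg ‖x‖])

lemma jb_pos {d : ℕ} (x : EuclideanSpace ℝ (Fin d)) : 0 < jb x :=
  lt_of_lt_of_le one_pos (one_le_jb x)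

lemma norm_le_jb {d : ℕ} (x : EuclideanSpace ℝ (Fin d)) : ‖x‖ ≤ jb x := by
  rw [jb]
  calc ‖x‖ = Real.sqrt (‖x‖ ^ 2) := (Real.sqrt_sq (norm_nonneg x)).symm
    _ ≤ Real.sqrt (1 + ‖x‖ ^ 2) := Real.sqrt_le_sqrt (by linarith)

lemma jb_le {d : ℕ} (x : EuclideanSpace ℝ (Fin d)) : jb x ≤ 1 + ‖x‖ := by
  rw [jb, show (1:ℝ) + ‖x‖ = Real.sqrt ((1 + ‖x‖) ^ 2) by
    rw [Real.sqrt_sq (by positivity)]]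
  exact Real.sqrt_le_sqrt (by nlinarith [norm_nonneg x])

/-- If `σ` is a `1/(p+1)`-pseudohomogeneous diffeomorphism of `ℝ^d`, then `σ(ℤ^d)` is
`(p,δ)`-dense for all sufficiently large `δ`: the balls `B(σ(n), δ⟨σ(n)⟩^{-p})` cover `ℝ^d`. -/
theorem pseudohomogeneous_image_dense (d : ℕ) (p r : ℝ) (hp : 0 ≤ p) (hr : r = 1 / (p + 1))
    (σ : EuclideanSpace ℝ (Fin d) → EuclideanSpace ℝ (Fin d))
    (hσ : ContDiff ℝ (⊤ : ℕ∞) σ) (hbij : Function.Bijective σ)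
    (c₁ c₂ c₃ c₄ : ℝ) (hc₁ : 0 < c₁) (hc₃ : 0 < c₃) (Ck : ℕ → ℝ)
    (hcomp : ∀ x, c₁ * jb x ^ r ≤ jb (σ x) ∧ jb (σ x) ≤ c₂ * jb x ^ r)
    (hderiv : ∀ k : ℕ, 1 ≤ k → ∀ x, ‖iteratedFDeriv ℝ k σ x‖ ≤ Ck k * jb x ^ (r - k))
    (hjac : ∀ x, ∃ g : EuclideanSpace ℝ (Fin d) ≃L[ℝ] EuclideanSpace ℝ (Fin d),
      (g : EuclideanSpace ℝ (Fin d) →L[ℝ] EuclideanSpace ℝ (Fin d)) = fderiv ℝ σ x ∧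
      c₃ * jb x ^ (1 - r) ≤ ‖(g.symm : EuclideanSpace ℝ (Fin d) →L[ℝ] EuclideanSpace ℝ (Fin d))‖ ∧
      ‖(g.symm : EuclideanSpace ℝ (Fin d) →L[ℝ] EuclideanSpace ℝ (Fin d))‖ ≤ c₄ * jb x ^ (1 - r)) :
    ∃ δ₀ > (0 : ℝ), ∀ δ : ℝ, δ₀ ≤ δ →
      ∀ x : EuclideanSpace ℝ (Fin d), ∃ n : Fin d → ℤ,
        dist x (σ (intVec d n)) ≤ δ * jb (σ (intVec d n)) ^ (-p) := by
  have hp1 : (0:ℝ) < p + 1 := by linarith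
  have hr0 : 0 < r := by rw [hr]; positivity
  have hr1 : r ≤ 1 := by rw [hr, div_le_one hp1]; linarith
  have hrp : r * p = 1 - r := by rw [hr]; field_simp; ring
  -- c₂ positive
  have hc₂ : 0 < c₂ := by
    have h0 := hcomp 0
    have ht : (0:ℝ) < jb (0 : EuclideanSpace ℝ (Fin d)) ^ r :=
      Real.rpow_pos_of_pos (jb_pos _) r
    have := le_of_mul_le_mul_right (le_trans h0.1 h0.2) ht
    linarith
  set s : ℝ := Real.sqrt d / 2 with hs_def
  have hs0 : 0 ≤ s := by positivity
  set K₀ : ℝ := 2 * (1 + s) with hK₀_def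
  have hK₀ : 0 < K₀ := by positivity
  set C₁ : ℝ := max (Ck 1) 0 with hC₁_def
  have hC₁ : 0 ≤ C₁ := le_max_right _ _
  set K : ℝ := C₁ * K₀ ^ (1 - r) with hK_def
  have hK : 0 ≤ K := mul_nonneg hC₁ (Real.rpow_nonneg hK₀.le _)
  refine ⟨max 1 (K * s * c₂ ^ p), lt_of_lt_of_le one_pos (le_max_left _ _), ?_⟩
  intro δ hδ x
  obtain ⟨y, hy⟩ := hbij.2 x
  refine ⟨fun i => round (y i), ?_⟩
  set N := intVec d (fun i => round (y i)) with hN_def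
  -- distance from y to its integer rounding
  have hyN : ‖y - N‖ ≤ s := by
    have h1 : ‖y - N‖ = Real.sqrt (∑ i, ‖y i - ((round (y i) : ℤ) : ℝ)‖ ^ 2) := by
      rw [EuclideanSpace.norm_eq]; simp [N, intVec]
    rw [h1, hs_def]
    have h2 : (∑ i, ‖y i - ((round (y i) : ℤ) : ℝ)‖ ^ 2) ≤ (d : ℝ) * (1/2)^2 := by
      calc (∑ i, ‖y i - ((round (y i) : ℤ) : ℝ)‖ ^ 2)
          ≤ ∑ _i : Fin d, ((1:ℝ)/2)^2 := by
            refine Finset.sum_le_sum fun i _ => ?_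
            have : ‖y i - ((round (y i) : ℤ) : ℝ)‖ ≤ 1/2 := by
              rw [Real.norm_eq_abs]; exact abs_sub_round (y i)
            nlinarith [norm_nonneg (y i - ((round (y i) : ℤ) : ℝ))]
        _ = (d : ℝ) * (1/2)^2 := by simp [Finset.sum_const]
    calc Real.sqrt (∑ i, ‖y i - ((round (y i) : ℤ) : ℝ)‖ ^ 2)
        ≤ Real.sqrt ((d : ℝ) * (1/2)^2) := Real.sqrt_le_sqrt h2
      _ = Real.sqrt d / 2 := by
          rw [Real.sqrt_mul (Nat.cast_nonneg d), Real.sqrt_sq (by norm_num)]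
          ring
  -- jb comparison on the closed ball
  have hball : ∀ z ∈ Metric.closedBall N s, jb N ≤ K₀ * jb z := by
    intro z hz
    rw [Metric.mem_closedBall, dist_eq_norm] at hz
    have hNz : ‖N‖ ≤ ‖z‖ + s := by
      calc ‖N‖ ≤ ‖z‖ + ‖N - z‖ := by
            have := norm_add_le z (N - z); simpa using this
        _ ≤ ‖z‖ + s := by
            rw [(neg_sub z N).symm, norm_neg]; linarith
    have h1 : jb N ≤ 1 + ‖z‖ + s := le_trans (jb_le N) (by linarith)
    have h2 : 1 + ‖z‖ ≤ 2 * jb z := by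
      have := one_le_jb z; have := norm_le_jb z; linarith
    have hz0 := norm_nonneg z
    nlinarith [one_le_jb z]
  -- derivative bound on the closed ball
  have hfd : ∀ z ∈ Metric.closedBall N s,
      ‖fderiv ℝ σ z‖ ≤ K * jb N ^ (r - 1) := by
    intro z hz
    have h0 : ‖fderiv ℝ σ z‖ = ‖iteratedFDeriv ℝ 1 σ z‖ := by
      rw [← norm_iteratedFDeriv_fderiv, norm_iteratedFDeriv_zero]
    have h1 : ‖iteratedFDeriv ℝ 1 σ z‖ ≤ Ck 1 * jb z ^ (r - 1) := by
      have := hderiv 1 le_rfl z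
      simpa using this
    have h2 : Ck 1 * jb z ^ (r - 1) ≤ C₁ * jb z ^ (r - 1) :=
      mul_le_mul_of_nonneg_right (le_max_left _ _) (Real.rpow_nonneg (jb_pos z).le _)
    have h3 : jb z ^ (r - 1) ≤ jb N ^ (r - 1) * K₀ ^ (1 - r) := by
      have hle : jb N / K₀ ≤ jb z := by
        rw [div_le_iff₀ hK₀]
        calc jb N ≤ K₀ * jb z := hball z hz
          _ = jb z * K₀ := by ring
      have hpos : 0 < jb N / K₀ := div_pos (jb_pos N) hK₀
      have := Real.rpow_le_rpow_of_nonpos hpos hle (by linarith : r - 1 ≤ 0)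
      calc jb z ^ (r - 1) ≤ (jb N / K₀) ^ (r - 1) := this
        _ = jb N ^ (r - 1) * K₀ ^ (1 - r) := by
            rw [Real.div_rpow (jb_pos N).le hK₀.le, div_eq_mul_inv,
              ← Real.rpow_neg hK₀.le, neg_sub]
    calc ‖fderiv ℝ σ z‖ = ‖iteratedFDeriv ℝ 1 σ z‖ := h0
      _ ≤ C₁ * jb z ^ (r - 1) := le_trans h1 h2
      _ ≤ C₁ * (jb N ^ (r - 1) * K₀ ^ (1 - r)) := mul_le_mul_of_nonneg_left h3 hC₁
      _ = K * jb N ^ (r - 1) := by rw [hK_def]; ring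
  -- mean value inequality
  have hmv : ‖σ y - σ N‖ ≤ K * jb N ^ (r - 1) * ‖y - N‖ := by
    refine (convex_closedBall N s).norm_image_sub_le_of_norm_fderiv_le
      (fun z _ => (hσ.differentiable (by simp)).differentiableAt) hfd
      (Metric.mem_closedBall_self hs0) ?_
    rw [Metric.mem_closedBall, dist_eq_norm]; exact hyN
  have hjbN : 0 ≤ jb N ^ (r - 1) := Real.rpow_nonneg (jb_pos N).le _
  have hmv2 : dist x (σ N) ≤ K * jb N ^ (r - 1) * s := by
    rw [← hy, dist_eq_norm]
    calc ‖σ y - σ N‖ ≤ K * jb N ^ (r - 1) * ‖y - N‖ := hmv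
      _ ≤ K * jb N ^ (r - 1) * s :=
          mul_le_mul_of_nonneg_left hyN (mul_nonneg hK hjbN)
  -- lower bound for jb (σ N) ^ (-p)
  have hσN : 0 < jb (σ N) := jb_pos _
  have h1 : c₂ ^ (-p) * jb N ^ (r - 1) ≤ jb (σ N) ^ (-p) := by
    have hle : jb (σ N) ≤ c₂ * jb N ^ r := (hcomp N).2
    have := Real.rpow_le_rpow_of_nonpos hσN hle (by linarith : -p ≤ 0)
    have he : (jb N ^ r) ^ (-p) = jb N ^ (r - 1) := by
      rw [← Real.rpow_mul (jb_pos N).le,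
        show r * -p = r - 1 by rw [mul_neg, hrp]; ring]
    calc c₂ ^ (-p) * jb N ^ (r - 1)
        = (c₂ * jb N ^ r) ^ (-p) := by
          rw [Real.mul_rpow hc₂.le (Real.rpow_nonneg (jb_pos N).le r), he]
      _ ≤ jb (σ N) ^ (-p) := this
  -- conclusion
  have h2 : K * s * c₂ ^ p ≤ δ := le_trans (le_max_right _ _) hδ
  have hδ1 : (1:ℝ) ≤ δ := le_trans (le_max_left _ _) hδ
  have hcc : c₂ ^ p * c₂ ^ (-p) = 1 := by
    rw [← Real.rpow_add hc₂]; simp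
  calc dist x (σ N) ≤ K * jb N ^ (r - 1) * s := hmv2
    _ = (K * s * c₂ ^ p) * (c₂ ^ (-p) * jb N ^ (r - 1)) := by
        linear_combination (-(K * s * jb N ^ (r - 1))) * hcc
    _ ≤ δ * (c₂ ^ (-p) * jb N ^ (r - 1)) :=
        mul_le_mul_of_nonneg_right h2
          (mul_nonneg (Real.rpow_nonneg hc₂.le _) hjbN)
    _ ≤ δ * jb (σ N) ^ (-p) :=
        mul_le_mul_of_nonneg_left h1 (by linarith)
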